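/- Let d = 1 + √3 (as a complex number), A = ![![1, 1], ![1, -1]] and B = ![![1, -i], ![-i, 1]] be 2×2 complex matrices. There do not exist complex numbers f ≠ 0 and f' ≠ 0 and 2×2 complex matrices K, K' with K invertible such that K = (f / (2d)) • (A * K') and K' = (f' * exp(5πi/6)) • (B * K). -/

import Mathlib

/-! Substituting the second equation into the first gives `K = (s * t) • (A * B) * K` for
scalars `s, t`; since `K` is invertible, `(s * t) • (A * B) = 1`. This is impossible, because
`A * B = !![1 - i, 1 - i; 1 + i, -1 - i]` has a nonzero off-diagonal entry, so it is not a
scalar matrix. -/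

open Complex Matrix

theorem Matrix.smul_ne_one_of_apply_ne_zero {n R : Type*} [Fintype n] [DecidableEq n]
    [Ring R] [NoZeroDivisors R] [Nontrivial R] {M : Matrix n n R} {i j : n} (hij : i ≠ j)
    (hM : M i j ≠ 0) (c : R) : c • M ≠ 1 := by
  intro h
  have hc : c = 0 := by
    simpa [hM, hij] using congrFun (congrFun h i) j
  simpa [hc] using congrFun (congrFun h i) i

theorem Matrix.smul_mul_smul_mul_eq_self_iff {n R : Type*} [Fintype n] [DecidableEq n]
    [CommRing R] {A B K : Matrix n n R} (hK : IsUnit K) (s t : R) :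
    s • (A * (t • (B * K))) = K ↔ (s * t) • (A * B) = 1 := by
  rw [Matrix.mul_smul, smul_smul, ← Matrix.mul_assoc, ← Matrix.smul_mul, hK.mul_eq_right]

theorem categoryE_no_symmetrized_6j :
    ¬ ∃ (f f' : ℂ) (K K' : Matrix (Fin 2) (Fin 2) ℂ),
      f ≠ 0 ∧ f' ≠ 0 ∧ IsUnit K ∧
      K = (f / (2 * ((1 : ℂ) + Real.sqrt 3))) • (!![1, 1; 1, -1] * K') ∧
      K' = (f' * Complex.exp (5 * Real.pi * Complex.I / 6)) •
        (!![1, -Complex.I; -Complex.I, 1] * K) := by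
  rintro ⟨f, f', K, K', -, -, hK, hKK', rfl⟩
  have h_offdiag : (!![1, 1; 1, -1] * !![1, -I; -I, 1] : Matrix (Fin 2) (Fin 2) ℂ) 0 1 ≠ 0 := by
    simp [Matrix.mul_apply, Fin.sum_univ_two, Complex.ext_iff]
  exact Matrix.smul_ne_one_of_apply_ne_zero (by decide) h_offdiag _
    ((Matrix.smul_mul_smul_mul_eq_self_iff hK _ _).mp hKK'.symm)
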